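/- Let d, t ≥ 1 and let ψ_1, …, ψ_K be unit vectors in ℂ^d. Then the t-th frame potential Φ_t := (1/K²)·Σ_{j,k=1}^{K} |⟨ψ_j, ψ_k⟩|^{2t} satisfies Φ_t ≥ 1/C(d+t−1, t), and equality holds if and only if (1/K)·Σ_{j=1}^{K} (|ψ_j⟩⟨ψ_j|)^{⊗t} = P_[t]/C(d+t−1, t), i.e. if and only if {ψ_j} is a complex projective t-design. -/

import Mathlib

/-!
With `Ψ_j = ψ_j^{⊗t}`, the frame operator `M = (1/K) Σ_j |Ψ_j⟩⟨Ψ_j|` has trace `1`, satisfies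
`tr M² = Φ_t`, and lives on the symmetric subspace: `P_[t] M = M`. As `P_[t]` is an orthogonal
projection of trace `D = C(d+t-1, t)` (Burnside: the `S_t`-orbits on `[d]^t` are the multisets of
size `t`), expanding the Hilbert–Schmidt norm gives `‖M - P_[t]/D‖²_HS = tr M² - 1/D`, which is
nonnegative and vanishes exactly when `M = P_[t]/D`.
-/

open scoped BigOperators

noncomputable section

/-- `t`-fold tensor (Kronecker) power of a matrix, acting on `(ℂ^α)^{⊗t}`. -/
def tpow {α : Type*} [Fintype α] (M : Matrix α α ℂ) (t : ℕ) :
    Matrix (Fin t → α) (Fin t → α) ℂ :=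
  Matrix.of fun x y => ∏ i, M (x i) (y i)

/-- The rank-one operator `|ψ⟩⟨ψ|`. -/
def rankOne {α : Type*} (ψ : α → ℂ) : Matrix α α ℂ :=
  Matrix.of fun i j => ψ i * (starRingEnd ℂ) (ψ j)

/-- The operator `U_σ` permuting the `t` tensor factors of `(ℂ^α)^{⊗t}`. -/
def permOp (α : Type*) [DecidableEq α] {t : ℕ} (σ : Equiv.Perm (Fin t)) :
    Matrix (Fin t → α) (Fin t → α) ℂ :=
  Matrix.of fun x y => if (fun k => x (σ k)) = y then 1 else 0

/-- The projector `P_[t]` onto the symmetric subspace `Sym_t(ℂ^α)`. -/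
def symProj (α : Type*) [DecidableEq α] (t : ℕ) :
    Matrix (Fin t → α) (Fin t → α) ℂ :=
  (t.factorial : ℂ)⁻¹ • ∑ σ : Equiv.Perm (Fin t), permOp α σ

open Matrix Finset

section TensorPower

variable {R α : Type*} [CommSemiring R]

def vecTensorPow (v : α → R) (t : ℕ) : (Fin t → α) → R :=
  fun x => ∏ i, v (x i)

lemma vecTensorPow_comp_perm (v : α → R) {t : ℕ} (σ : Equiv.Perm (Fin t)) (x : Fin t → α) :
    vecTensorPow v t (x ∘ σ) = vecTensorPow v t x :=
  Equiv.prod_comp σ fun i => v (x i)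

lemma dotProduct_vecTensorPow [Fintype α] (u v : α → R) (t : ℕ) :
    vecTensorPow u t ⬝ᵥ vecTensorPow v t = (u ⬝ᵥ v) ^ t := by
  simp only [dotProduct, vecTensorPow, Fintype.sum_pow, prod_mul_distrib]

lemma star_vecTensorPow [StarRing R] (v : α → R) (t : ℕ) :
    star (vecTensorPow v t) = vecTensorPow (star v) t := by
  ext x
  simp [vecTensorPow, star_prod]

end TensorPower

section RankOne

variable {α : Type*}

lemma rankOne_eq_vecMulVec (ψ : α → ℂ) : rankOne ψ = vecMulVec ψ (star ψ) := rfl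

lemma tpow_rankOne [Fintype α] (ψ : α → ℂ) (t : ℕ) :
    tpow (rankOne ψ) t = rankOne (vecTensorPow ψ t) := by
  ext x y
  simp [tpow, rankOne, vecTensorPow, prod_mul_distrib, map_prod]

lemma isHermitian_rankOne (ψ : α → ℂ) : (rankOne ψ).IsHermitian := by
  rw [IsHermitian, rankOne_eq_vecMulVec, conjTranspose_vecMulVec, star_star]

lemma trace_rankOne [Fintype α] (ψ : α → ℂ) : trace (rankOne ψ) = star ψ ⬝ᵥ ψ := by
  rw [rankOne_eq_vecMulVec, trace_vecMulVec, dotProduct_comm]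

lemma trace_rankOne_mul_rankOne [Fintype α] (u v : α → ℂ) :
    trace (rankOne u * rankOne v) = ((‖star u ⬝ᵥ v‖ ^ 2 : ℝ) : ℂ) := by
  rw [rankOne_eq_vecMulVec, rankOne_eq_vecMulVec, vecMulVec_mul_vecMulVec, trace_vecMulVec,
    dotProduct_smul, smul_eq_mul, dotProduct_star, dotProduct_comm v, mul_comm,
    Complex.ofReal_pow]
  exact Complex.conj_mul' _

end RankOne

section PermOp

variable {α : Type*} [DecidableEq α] {t : ℕ}

lemma permOp_mulVec [Fintype α] (σ : Equiv.Perm (Fin t)) (v : (Fin t → α) → ℂ) :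
    permOp α σ *ᵥ v = fun x => v (x ∘ σ) := by
  ext x
  simp [mulVec, dotProduct, permOp, Function.comp_def]

lemma permOp_mul_permOp [Fintype α] (σ τ : Equiv.Perm (Fin t)) :
    permOp α σ * permOp α τ = permOp α (σ * τ) := by
  ext x y
  simp only [mul_apply, permOp, of_apply, ite_mul, one_mul, zero_mul]
  rw [sum_ite_eq]
  simp only [mem_univ, if_true, Equiv.Perm.mul_apply]
  congr

lemma conjTranspose_permOp (σ : Equiv.Perm (Fin t)) :
    (permOp α σ)ᴴ = permOp α σ⁻¹ := by
  ext x y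
  have h : (fun k => y (σ k)) = x ↔ (fun k => x (σ⁻¹ k)) = y := by
    constructor <;> rintro rfl <;> funext k <;> simp
  simp only [conjTranspose_apply, permOp, of_apply, h]
  split_ifs <;> simp

end PermOp

section SymProj

variable {α : Type*} [Fintype α] [DecidableEq α] {t : ℕ}

lemma symProj_mul_of_forall_permOp_mul {β : Type*} {A : Matrix (Fin t → α) β ℂ}
    (hA : ∀ σ : Equiv.Perm (Fin t), permOp α σ * A = A) : symProj α t * A = A := by
  rw [symProj, smul_mul, Matrix.sum_mul]
  simp only [hA]
  rw [sum_const, card_univ, Fintype.card_perm, Fintype.card_fin, ← Nat.cast_smul_eq_nsmul ℂ,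
    smul_smul,
    inv_mul_cancel₀ (Nat.cast_ne_zero.mpr t.factorial_ne_zero), one_smul]

lemma permOp_mul_symProj (σ : Equiv.Perm (Fin t)) :
    permOp α σ * symProj α t = symProj α t := by
  rw [symProj, Matrix.mul_smul, Matrix.mul_sum]
  simp_rw [permOp_mul_permOp]
  exact congrArg _ (Equiv.sum_comp (Equiv.mulLeft σ) (permOp α))

lemma symProj_mul_self : symProj α t * symProj α t = symProj α t :=
  symProj_mul_of_forall_permOp_mul permOp_mul_symProj

omit [Fintype α] in
lemma isHermitian_symProj : (symProj α t).IsHermitian := by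
  rw [IsHermitian, symProj, conjTranspose_smul, conjTranspose_sum]
  simp_rw [conjTranspose_permOp]
  congr 1
  · simp
  · exact Equiv.sum_comp (Equiv.inv _) (permOp α)

end SymProj

section Burnside

open MulAction

lemma exists_comp_perm_eq_of_perm_ofFn {β : Type*} [LinearOrder β] {n : ℕ} {x y : Fin n → β}
    (h : List.Perm (List.ofFn x) (List.ofFn y)) : ∃ σ : Equiv.Perm (Fin n), y ∘ σ = x := by
  -- sorting `x` and `y` yields the same monotone tuple
  have hsort : x ∘ Tuple.sort x = y ∘ Tuple.sort y := by
    refine List.ofFn_injective (List.Perm.eq_of_sortedLE ?_ ?_ ?_)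
    · exact List.sortedLE_ofFn_iff.mpr (Tuple.monotone_sort x)
    · exact List.sortedLE_ofFn_iff.mpr (Tuple.monotone_sort y)
    · exact ((Tuple.sort x).ofFn_comp_perm x).trans
        (h.trans ((Tuple.sort y).ofFn_comp_perm y).symm)
  refine ⟨Tuple.sort y * (Tuple.sort x)⁻¹, funext fun k => ?_⟩
  simpa using (congrFun hsort ((Tuple.sort x)⁻¹ k)).symm

attribute [local instance] arrowAction

variable {α : Type*} {t : ℕ}

lemma perm_smul_eq_comp (σ : Equiv.Perm (Fin t)) (x : Fin t → α) : σ • x = x ∘ ⇑σ⁻¹ := rfl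

def orbitRelPermEquivSym (α : Type*) [LinearOrder α] (t : ℕ) :
    Quotient (orbitRel (Equiv.Perm (Fin t)) (Fin t → α)) ≃ Sym α t := by
  refine Equiv.ofBijective
    (Quotient.lift (fun x : Fin t → α => (⟨List.ofFn x, by simp⟩ : Sym α t)) ?_) ⟨?_, ?_⟩
  · rintro x y hxy
    obtain ⟨σ, rfl⟩ := mem_orbit_iff.mp hxy
    exact Subtype.ext (Multiset.coe_eq_coe.mpr (Equiv.Perm.ofFn_comp_perm σ⁻¹ y))
  · rintro ⟨x⟩ ⟨y⟩ hxy
    obtain ⟨σ, hσ⟩ := exists_comp_perm_eq_of_perm_ofFn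
      (Multiset.coe_eq_coe.mp (congrArg Subtype.val hxy))
    exact Quotient.sound (mem_orbit_iff.mpr ⟨σ⁻¹, by simpa [perm_smul_eq_comp] using hσ⟩)
  · rintro ⟨m, hm⟩
    have hlen : m.toList.length = t := by rw [Multiset.length_toList, hm]
    refine ⟨⟦fun i => m.toList.get (Fin.cast hlen.symm i)⟧, Subtype.ext ?_⟩
    change ((List.ofFn fun i => m.toList.get (Fin.cast hlen.symm i) : List α) : Multiset α) = m
    conv_rhs => rw [← Multiset.coe_toList m]
    congr 1
    exact List.ext_get (by simp [hlen]) fun i _ _ => by simp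

variable [DecidableEq α] [Fintype α]

lemma trace_permOp (σ : Equiv.Perm (Fin t)) :
    trace (permOp α σ) = Fintype.card (fixedBy (Fin t → α) σ) := by
  have hfixed (x : Fin t → α) : (fun k => x (σ k)) = x ↔ x ∈ fixedBy (Fin t → α) σ := by
    rw [mem_fixedBy, perm_smul_eq_comp, Equiv.Perm.inv_def, Equiv.comp_symm_eq, eq_comm]
    rfl
  simp only [trace, diag_apply, permOp, of_apply, Fintype.card_subtype, card_filter]
  push_cast
  simp only [hfixed]

lemma trace_symProj (d t : ℕ) :
    trace (symProj (Fin d) t) = ((d + t - 1).choose t : ℂ) := by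
  let : Fintype (Quotient (orbitRel (Equiv.Perm (Fin t)) (Fin t → Fin d))) :=
    Fintype.ofEquiv _ (orbitRelPermEquivSym (Fin d) t).symm
  have hburnside := sum_card_fixedBy_eq_card_orbits_mul_card_group
    (Equiv.Perm (Fin t)) (Fin t → Fin d)
  rw [Fintype.card_congr (orbitRelPermEquivSym (Fin d) t), Sym.card_sym_eq_choose,
    Fintype.card_fin, Fintype.card_perm, Fintype.card_fin] at hburnside
  rw [symProj, trace_smul, trace_sum]
  simp only [trace_permOp]
  rw [← Nat.cast_sum, hburnside, smul_eq_mul, Nat.cast_mul, mul_comm,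
    mul_inv_cancel_right₀ (Nat.cast_ne_zero.mpr t.factorial_ne_zero)]

end Burnside

section HilbertSchmidt

open scoped ComplexOrder

variable {n : Type*} [Fintype n] {P M : Matrix n n ℂ}

lemma trace_mul_self_eq_inv_trace_add (hP : P.IsHermitian) (hPP : P * P = P)
    (hM : M.IsHermitian) (hMtr : trace M = 1) (hPM : P * M = M) :
    trace (M * M) = (trace P)⁻¹ +
      trace ((M - (trace P)⁻¹ • P)ᴴ * (M - (trace P)⁻¹ • P)) := by
  have hMP : M * P = M := by
    simpa only [conjTranspose_mul, hP.eq, hM.eq] using congrArg conjTranspose hPM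
  have hstar : star (trace P)⁻¹ = (trace P)⁻¹ := by
    rw [star_inv₀, ← trace_conjTranspose, hP.eq]
  rw [conjTranspose_sub, conjTranspose_smul, hstar, hP.eq, hM.eq]
  simp only [Matrix.sub_mul, Matrix.mul_sub, Matrix.smul_mul, Matrix.mul_smul, hMP, hPM,
    hPP, trace_sub, trace_smul, hMtr, smul_eq_mul]
  -- `c⁻¹ * c * c⁻¹ = c⁻¹` holds also for `c = 0` (where `0⁻¹ = 0`)
  have hinv := mul_inv_mul_cancel (trace P)⁻¹
  rw [inv_inv] at hinv
  linear_combination -hinv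

lemma inv_trace_le_trace_mul_self (hP : P.IsHermitian) (hPP : P * P = P)
    (hM : M.IsHermitian) (hMtr : trace M = 1) (hPM : P * M = M) :
    (trace P)⁻¹ ≤ trace (M * M) := by
  rw [trace_mul_self_eq_inv_trace_add hP hPP hM hMtr hPM]
  exact le_add_of_nonneg_right (posSemidef_conjTranspose_mul_self _).trace_nonneg

lemma trace_mul_self_eq_inv_trace_iff (hP : P.IsHermitian) (hPP : P * P = P)
    (hM : M.IsHermitian) (hMtr : trace M = 1) (hPM : P * M = M) :
    trace (M * M) = (trace P)⁻¹ ↔ M = (trace P)⁻¹ • P := by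
  rw [trace_mul_self_eq_inv_trace_add hP hPP hM hMtr hPM, add_eq_left,
    trace_conjTranspose_mul_self_eq_zero_iff, sub_eq_zero]

end HilbertSchmidt

section FramePotential

variable {α : Type*} [Fintype α] {K : ℕ}

def frameOperator (ψ : Fin K → α → ℂ) (t : ℕ) : Matrix (Fin t → α) (Fin t → α) ℂ :=
  (K : ℂ)⁻¹ • ∑ j, tpow (rankOne (ψ j)) t

def framePotential (ψ : Fin K → α → ℂ) (t : ℕ) : ℝ :=
  1 / (K : ℝ) ^ 2 * ∑ j, ∑ k, ‖star (ψ j) ⬝ᵥ ψ k‖ ^ (2 * t)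

lemma frameOperator_eq_smul_sum_rankOne (ψ : Fin K → α → ℂ) (t : ℕ) :
    frameOperator ψ t = (K : ℂ)⁻¹ • ∑ j, rankOne (vecTensorPow (ψ j) t) := by
  simp only [frameOperator, tpow_rankOne]

lemma isHermitian_frameOperator (ψ : Fin K → α → ℂ) (t : ℕ) :
    (frameOperator ψ t).IsHermitian := by
  rw [frameOperator, IsHermitian, conjTranspose_smul, conjTranspose_sum]
  simp [tpow_rankOne, (isHermitian_rankOne _).eq]

lemma trace_frameOperator (hK : K ≠ 0) {ψ : Fin K → α → ℂ} (hψ : ∀ j, star (ψ j) ⬝ᵥ ψ j = 1)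
    (t : ℕ) : trace (frameOperator ψ t) = 1 := by
  simp only [frameOperator_eq_smul_sum_rankOne, trace_smul, trace_sum, trace_rankOne,
    star_vecTensorPow, dotProduct_vecTensorPow, hψ, one_pow, sum_const, card_univ,
    Fintype.card_fin, smul_eq_mul, nsmul_eq_mul, mul_one]
  exact inv_mul_cancel₀ (Nat.cast_ne_zero.mpr hK)

lemma symProj_mul_frameOperator [DecidableEq α] (ψ : Fin K → α → ℂ) (t : ℕ) :
    symProj α t * frameOperator ψ t = frameOperator ψ t := by
  refine symProj_mul_of_forall_permOp_mul fun σ => ?_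
  simp only [frameOperator_eq_smul_sum_rankOne, Matrix.mul_smul, Matrix.mul_sum,
    rankOne_eq_vecMulVec, mul_vecMulVec, permOp_mulVec, vecTensorPow_comp_perm]

lemma trace_frameOperator_mul_self (ψ : Fin K → α → ℂ) (t : ℕ) :
    trace (frameOperator ψ t * frameOperator ψ t) = framePotential ψ t := by
  simp only [frameOperator_eq_smul_sum_rankOne, Matrix.smul_mul, Matrix.mul_smul,
    Matrix.sum_mul, Matrix.mul_sum, trace_smul, trace_sum, trace_rankOne_mul_rankOne,
    star_vecTensorPow, dotProduct_vecTensorPow, norm_pow, ← pow_mul, framePotential]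
  push_cast
  rw [sum_comm]
  simp only [smul_eq_mul, mul_sum, mul_comm t 2, ← mul_assoc, one_div, inv_pow, ← sq]

end FramePotential

theorem stmt0 (d t K : ℕ) (hK : 1 ≤ K)
    (ψ : Fin K → (Fin d → ℂ))
    (hunit : ∀ j, ∑ i, (starRingEnd ℂ) (ψ j i) * ψ j i = 1) :
    1 / ((d + t - 1).choose t : ℝ) ≤
      (1 / (K : ℝ) ^ 2) *
        ∑ j, ∑ k, ‖∑ i, (starRingEnd ℂ) (ψ j i) * ψ k i‖ ^ (2 * t) ∧
    ((1 / (K : ℝ) ^ 2) *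
        ∑ j, ∑ k, ‖∑ i, (starRingEnd ℂ) (ψ j i) * ψ k i‖ ^ (2 * t)
        = 1 / ((d + t - 1).choose t : ℝ) ↔
      (K : ℂ)⁻¹ • ∑ j, tpow (rankOne (ψ j)) t
        = (((d + t - 1).choose t : ℂ))⁻¹ • symProj (Fin d) t) := by
  set D := (d + t - 1).choose t
  change 1 / (D : ℝ) ≤ framePotential ψ t ∧
    (framePotential ψ t = 1 / (D : ℝ) ↔ frameOperator ψ t = (D : ℂ)⁻¹ • symProj (Fin d) t)
  have hM := trace_frameOperator (by omega) hunit t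
  have hle := inv_trace_le_trace_mul_self isHermitian_symProj symProj_mul_self
    (isHermitian_frameOperator ψ t) hM (symProj_mul_frameOperator ψ t)
  have hiff := trace_mul_self_eq_inv_trace_iff isHermitian_symProj symProj_mul_self
    (isHermitian_frameOperator ψ t) hM (symProj_mul_frameOperator ψ t)
  have hD : (D : ℂ)⁻¹ = ((1 / (D : ℝ) : ℝ) : ℂ) := by push_cast; rw [one_div]
  rw [trace_symProj, trace_frameOperator_mul_self] at hle hiff
  constructor
  · rwa [hD, Complex.real_le_real] at hle
  · rw [← hiff, hD, Complex.ofReal_inj]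

end
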